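/- arXiv:2003.09631 — 2 statements merged into one kernel-verified Lean document; each statement's English description precedes it below -/
import Mathlib

section
/- Let A be a self-adjoint operator on a Hilbert space H with strictly positive lower bound m(A) > 0. Then for every h in H, the supremum over nonzero f in the domain of A of |⟨f,h⟩|²/⟨f,Af⟩ equals ⟨h, A⁻¹h⟩. -/
open scoped InnerProductSpace

/-!
A bounded-below symmetric operator `A` makes `(f, g) ↦ ⟪f, A g⟫` a positive definite form on its
domain, so Cauchy–Schwarz for this form gives `|⟪f, A g⟫|² ≤ ⟪f, A f⟫ ⟪g, A g⟫`. Writing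
`h = A g` with `g = A⁻¹ h`, every quotient `|⟪f, h⟫|² / ⟪f, A f⟫` is therefore at most
`⟪g, A g⟫ = ⟪h, A⁻¹ h⟫`, and `f = g` attains this bound.
-/

namespace LinearPMap

variable {H : Type*} [NormedAddCommGroup H] [InnerProductSpace ℂ H] {A : H →ₗ.[ℂ] H}

theorem _root_.IsSelfAdjoint.isFormalAdjoint [CompleteSpace H] (hA : IsSelfAdjoint A) :
    A.IsFormalAdjoint A := by
  have h := adjoint_isFormalAdjoint hA.dense_domain
  rwa [isSelfAdjoint_def.mp hA] at h

theorem IsFormalAdjoint.inner_map_self_eq_re (hA : A.IsFormalAdjoint A) (f : A.domain) :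
    ⟪(f : H), A f⟫_ℂ = ((⟪(f : H), A f⟫_ℂ).re : ℂ) :=
  (Complex.conj_eq_iff_re.mp (by rw [inner_conj_symm, hA])).symm

theorem re_inner_map_self_pos {m : ℝ} (hm : 0 < m)
    (hlow : ∀ f : A.domain, m * ‖(f : H)‖ ^ 2 ≤ (⟪(f : H), A f⟫_ℂ).re)
    {f : A.domain} (hf : (f : H) ≠ 0) : 0 < (⟪(f : H), A f⟫_ℂ).re :=
  (mul_pos hm (pow_pos (norm_pos_iff.mpr hf) 2)).trans_le (hlow f)

/-- Cauchy–Schwarz for the form `⟪f, A g⟫`. -/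
theorem IsFormalAdjoint.norm_inner_map_sq_le (hA : A.IsFormalAdjoint A)
    (hnonneg : ∀ f : A.domain, 0 ≤ (⟪(f : H), A f⟫_ℂ).re) (f g : A.domain)
    (hf : 0 < (⟪(f : H), A f⟫_ℂ).re) :
    ‖⟪(f : H), A g⟫_ℂ‖ ^ 2 ≤ (⟪(f : H), A f⟫_ℂ).re * (⟪(g : H), A g⟫_ℂ).re := by
  set a := (⟪(f : H), A f⟫_ℂ).re
  set b := ⟪(f : H), A g⟫_ℂ
  have hff : ⟪(f : H), A f⟫_ℂ = (a : ℂ) := hA.inner_map_self_eq_re f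
  have hgf : ⟪(g : H), A f⟫_ℂ = (starRingEnd ℂ) b := by
    rw [← inner_conj_symm, hA f g]
  have hbb : (starRingEnd ℂ) b * b = ((‖b‖ : ℝ) : ℂ) ^ 2 := by
    rw [RCLike.conj_mul]; norm_cast
  -- the form is nonnegative at `a g - b f`, the projection of `g` off `f`
  have hw : ⟪(a : ℂ) • (g : H) - b • (f : H), (a : ℂ) • (A g : H) - b • (A f : H)⟫_ℂ
      = ((a ^ 2 : ℝ) : ℂ) * ⟪(g : H), A g⟫_ℂ - ((a * ‖b‖ ^ 2 : ℝ) : ℂ) := by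
    simp only [inner_sub_left, inner_sub_right, inner_smul_left, inner_smul_right,
      Complex.conj_ofReal, hgf, hff]
    push_cast
    linear_combination (-(a : ℂ)) * hbb
  have hpos := hnonneg ((a : ℂ) • g - b • f)
  rw [A.map_sub, A.map_smul, A.map_smul] at hpos
  push_cast at hpos
  rw [hw, Complex.sub_re, Complex.re_ofReal_mul, Complex.ofReal_re] at hpos
  nlinarith

variable {m : ℝ} (hm : 0 < m)
  (hlow : ∀ f : A.domain, m * ‖(f : H)‖ ^ 2 ≤ (⟪(f : H), A f⟫_ℂ).re)
include hm hlow

theorem IsFormalAdjoint.isGreatest_norm_inner_map_sq_div (hA : A.IsFormalAdjoint A)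
    {g : A.domain} (hg : (g : H) ≠ 0) :
    IsGreatest {r : ℝ | ∃ f : A.domain, (f : H) ≠ 0 ∧
        r = ‖⟪(f : H), A g⟫_ℂ‖ ^ 2 / (⟪(f : H), A f⟫_ℂ).re} (⟪(g : H), A g⟫_ℂ).re := by
  have hg_pos := re_inner_map_self_pos hm hlow hg
  refine ⟨⟨g, hg, ?_⟩, ?_⟩
  · rw [hA.inner_map_self_eq_re g, Complex.norm_real, Complex.ofReal_re, Real.norm_eq_abs,
      abs_of_pos hg_pos, sq, mul_self_div_self]
  · rintro r ⟨f, hf, rfl⟩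
    have hf_pos := re_inner_map_self_pos hm hlow hf
    rw [div_le_iff₀ hf_pos, mul_comm]
    exact hA.norm_inner_map_sq_le (fun f ↦ le_trans (by positivity) (hlow f)) f g hf_pos

theorem IsFormalAdjoint.sSup_norm_inner_map_sq_div (hA : A.IsFormalAdjoint A) (g : A.domain) :
    sSup {r : ℝ | ∃ f : A.domain, (f : H) ≠ 0 ∧
        r = ‖⟪(f : H), A g⟫_ℂ‖ ^ 2 / (⟪(f : H), A f⟫_ℂ).re} = (⟪(g : H), A g⟫_ℂ).re := by
  by_cases hg : (g : H) = 0
  · have hg' : g = 0 := Subtype.ext hg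
    subst hg'
    have hsub : {r : ℝ | ∃ f : A.domain, (f : H) ≠ 0 ∧
        r = ‖⟪(f : H), A 0⟫_ℂ‖ ^ 2 / (⟪(f : H), A f⟫_ℂ).re} ⊆ {0} := by
      rintro r ⟨f, -, rfl⟩
      simp
    rcases Set.subset_singleton_iff_eq.mp hsub with h0 | h0 <;> rw [h0] <;> simp
  · exact (hA.isGreatest_norm_inner_map_sq_div hm hlow hg).csSup_eq

end LinearPMap

theorem stmt0_general
    {H : Type*} [NormedAddCommGroup H] [InnerProductSpace ℂ H] [CompleteSpace H]
    (A : H →ₗ.[ℂ] H) (hA : IsSelfAdjoint A)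
    (m : ℝ) (hm : 0 < m)
    (hlow : ∀ f : A.domain, m * ‖(f : H)‖ ^ 2 ≤ (⟪(f : H), A f⟫_ℂ).re)
    (Ainv : H →L[ℂ] H)
    (hAinv_mem : ∀ h : H, Ainv h ∈ A.domain)
    (hAinv_right : ∀ h : H, A ⟨Ainv h, hAinv_mem h⟩ = h)
    (h : H) :
    sSup {r : ℝ | ∃ f : A.domain, (f : H) ≠ 0 ∧
        r = ‖⟪(f : H), h⟫_ℂ‖ ^ 2 / (⟪(f : H), A f⟫_ℂ).re} =
      (⟪h, Ainv h⟫_ℂ).re := by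
  have key := hA.isFormalAdjoint.sSup_norm_inner_map_sq_div hm hlow ⟨Ainv h, hAinv_mem h⟩
  rw [hAinv_right h] at key
  rw [key, ← inner_conj_symm, Complex.conj_re]

/-- For a self-adjoint operator `A` on a complex Hilbert space with
strictly positive lower bound (`m * ‖f‖² ≤ ⟨f, Af⟩` for some `m > 0`), and bounded
everywhere-defined inverse `Ainv`, the supremum over nonzero `f` in the domain of `A`
of `|⟨f,h⟩|²/⟨f,Af⟩` equals `⟨h, A⁻¹ h⟩`. -/
theorem stmt0
    {H : Type*} [NormedAddCommGroup H] [InnerProductSpace ℂ H] [CompleteSpace H]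
    (A : H →ₗ.[ℂ] H) (hA : IsSelfAdjoint A)
    (m : ℝ) (hm : 0 < m)
    (hlow : ∀ f : A.domain, m * ‖(f : H)‖ ^ 2 ≤ (⟪(f : H), A f⟫_ℂ).re)
    (Ainv : H →L[ℂ] H)
    (hAinv_mem : ∀ h : H, Ainv h ∈ A.domain)
    (hAinv_right : ∀ h : H, A ⟨Ainv h, hAinv_mem h⟩ = h)
    (hAinv_left : ∀ f : A.domain, Ainv (A f) = (f : H))
    (h : H) :
    sSup {r : ℝ | ∃ f : A.domain, (f : H) ≠ 0 ∧
        r = ‖⟪(f : H), h⟫_ℂ‖ ^ 2 / (⟪(f : H), A f⟫_ℂ).re} =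
      (⟪h, Ainv h⟫_ℂ).re :=
  stmt0_general A hA m hm hlow Ainv hAinv_mem hAinv_right h
end

section
/- Define F(λ) = 12 - 6√λ (1 + cos√λ)/sin√λ for λ ∈ (0, π²). Then F is strictly increasing on (0, π²) and lim_{λ↑π²} F(λ) = 12. Consequently, for t ≥ 12 the equation F(λ) = t has no solution λ ∈ (0, π²). -/
open Real Set Filter

/-! With `x = √λ`, the half-angle formulas give `F(λ) = 12 - 6 x cot (x / 2)`. The function
`x cot (x / 2)` has derivative `(sin x - x) / (2 sin² (x / 2)) < 0` on `(0, 2π)`, is positive on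
`(0, π)` and vanishes continuously at `x = π`, so `F` is increasing, tends to `12`, and stays
below `12`. -/

/-- The secular function `F(λ) = 12 - 6√λ(1 + cos√λ)/sin√λ`. -/
noncomputable def Fsec : ℝ → ℝ :=
  fun lam => 12 - 6 * Real.sqrt lam * (1 + Real.cos (Real.sqrt lam)) / Real.sin (Real.sqrt lam)

theorem Real.sin_eq_two_mul_sin_half_mul_cos_half (x : ℝ) :
    sin x = 2 * sin (x / 2) * cos (x / 2) := by
  rw [← sin_two_mul, mul_div_cancel₀ x two_ne_zero]

theorem Real.one_add_cos_div_sin (x : ℝ) : (1 + cos x) / sin x = cos (x / 2) / sin (x / 2) := by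
  have hsin := sin_eq_two_mul_sin_half_mul_cos_half x
  have hcos : 1 + cos x = 2 * cos (x / 2) ^ 2 := by
    rw [cos_sq, mul_div_cancel₀ x two_ne_zero]; ring
  rcases eq_or_ne (sin (x / 2)) 0 with hs | hs
  · simp [hsin, hs]
  rcases eq_or_ne (cos (x / 2)) 0 with hc | hc
  · simp [hsin, hc]
  rw [hsin, hcos]
  field_simp

noncomputable def mulCotHalf (x : ℝ) : ℝ := x * (cos (x / 2) / sin (x / 2))

theorem Fsec_eq_sub_mulCotHalf (lam : ℝ) : Fsec lam = 12 - 6 * mulCotHalf √lam := by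
  rw [Fsec, mulCotHalf, ← one_add_cos_div_sin]
  ring

theorem hasDerivAt_mulCotHalf {x : ℝ} (hx : sin (x / 2) ≠ 0) :
    HasDerivAt mulCotHalf ((sin x - x) / (2 * sin (x / 2) ^ 2)) x := by
  have hhalf : HasDerivAt (fun y : ℝ => y / 2) (1 / 2) x := (hasDerivAt_id x).div_const 2
  refine ((hasDerivAt_id' x).mul (hhalf.cos.div hhalf.sin hx)).congr_deriv ?_
  simp only [Pi.div_apply]
  rw [sin_eq_two_mul_sin_half_mul_cos_half x]
  field_simp
  linear_combination (-x) * sin_sq_add_cos_sq (x / 2)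

theorem strictAntiOn_mulCotHalf : StrictAntiOn mulCotHalf (Ioo 0 (2 * π)) := by
  have hsin {x : ℝ} (hx : x ∈ Ioo 0 (2 * π)) : 0 < sin (x / 2) :=
    sin_pos_of_pos_of_lt_pi (by linarith [hx.1]) (by linarith [hx.2])
  refine strictAntiOn_of_deriv_neg (convex_Ioo 0 (2 * π))
    (fun x hx => (hasDerivAt_mulCotHalf (hsin hx).ne').continuousAt.continuousWithinAt)
    fun x hx => ?_
  rw [interior_Ioo] at hx
  rw [(hasDerivAt_mulCotHalf (hsin hx).ne').deriv]
  have := hsin hx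
  exact div_neg_of_neg_of_pos (by linarith [sin_lt hx.1]) (by positivity)

theorem mulCotHalf_pos {x : ℝ} (hx : x ∈ Ioo 0 π) : 0 < mulCotHalf x := by
  have hs : 0 < sin (x / 2) :=
    sin_pos_of_pos_of_lt_pi (by linarith [hx.1]) (by linarith [hx.2, pi_pos])
  have hc : 0 < cos (x / 2) :=
    cos_pos_of_mem_Ioo ⟨by linarith [hx.1, pi_pos], by linarith [hx.2]⟩
  exact mul_pos hx.1 (div_pos hc hs)

theorem continuousAt_mulCotHalf_pi : ContinuousAt mulCotHalf π := by
  have : sin (π / 2) ≠ 0 := by simp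
  unfold mulCotHalf
  fun_prop (disch := assumption)

theorem mulCotHalf_pi : mulCotHalf π = 0 := by simp [mulCotHalf]

theorem sqrt_mem_Ioo_of_mem_Ioo_sq {x a : ℝ} (ha : 0 ≤ a) (hx : x ∈ Ioo 0 (a ^ 2)) :
    √x ∈ Ioo 0 a :=
  ⟨sqrt_pos.2 hx.1, by simpa [sqrt_sq ha] using sqrt_lt_sqrt hx.1.le hx.2⟩

/-- `F` is strictly increasing on `(0, π²)` with
`lim_{λ↑π²} F(λ) = 12`; consequently, for `t ≥ 12` the equation `F(λ) = t` has no
solution `λ ∈ (0, π²)`. -/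
theorem stmt15 :
    StrictMonoOn Fsec (Ioo 0 (π ^ 2)) ∧
    Tendsto Fsec (nhdsWithin (π ^ 2) (Iio (π ^ 2))) (nhds 12) ∧
    ∀ t : ℝ, 12 ≤ t → ∀ lam ∈ Ioo (0:ℝ) (π ^ 2), Fsec lam ≠ t := by
  have hsqrt {lam : ℝ} (h : lam ∈ Ioo 0 (π ^ 2)) : √lam ∈ Ioo 0 π :=
    sqrt_mem_Ioo_of_mem_Ioo_sq pi_pos.le h
  have hFsec : Fsec = fun lam => 12 - 6 * mulCotHalf √lam := funext Fsec_eq_sub_mulCotHalf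
  refine ⟨fun a ha b hb hab => ?_, ?_, fun t ht lam hlam => ?_⟩
  · have hsub : Ioo 0 π ⊆ Ioo 0 (2 * π) := Ioo_subset_Ioo_right (by linarith [pi_pos])
    have := strictAntiOn_mulCotHalf (hsub (hsqrt ha)) (hsub (hsqrt hb)) (sqrt_lt_sqrt ha.1.le hab)
    simp only [hFsec]
    linarith
  · have hcont : ContinuousAt Fsec (π ^ 2) := by
      rw [hFsec]
      have : ContinuousAt mulCotHalf √(π ^ 2) := by
        rw [sqrt_sq pi_pos.le]
        exact continuousAt_mulCotHalf_pi
      fun_prop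
    simpa [hFsec, sqrt_sq pi_pos.le, mulCotHalf_pi] using hcont.tendsto.mono_left nhdsWithin_le_nhds
  · rw [Fsec_eq_sub_mulCotHalf]
    linarith [mulCotHalf_pos (hsqrt hlam)]
end
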